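/- Let a > 1 and let q be an even positive integer. The sequence of functions Y_n : ℝ^d → ℂ defined by Y_n(x) = Σ_{k=0}^{n} C_k(n,a) · exp(i·(p·x)·(−i)^q·(1 − 2k/n)^q/ħ) converges pointwise on ℝ^d to Y(x) = exp(i·(p·x)·(−i·a)^q/ħ) as n → ∞, and the convergence is uniform on every compact subset of ℝ^d. -/

import Mathlib

/-!
Expanding each exponential into its power series turns `Y_n(x)` into `∑ₘ wᵐ/m! · s_n(qm)`, with
`w = i(p·x)(-i)^q/ħ` and the moments `s_n(j) = ∑ₖ C_k(n,a)(1 - 2k/n)^j`, while the limit is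
`∑ₘ wᵐ/m! · a^{qm}`. The moment `s_n(j)` is `j!` times the `j`-th coefficient of
`(cosh(t/n) + a sinh(t/n))^n`. Coefficientwise, `1 + at/n ≤ cosh(t/n) + a sinh(t/n) ≤ e^{at/n}`,
all three series having nonnegative coefficients, so raising to the `n`-th power gives
`a^j n(n-1)⋯(n-j+1)/n^j ≤ s_n(j) ≤ a^j`. Thus `s_n(j) → a^j` under the bound `a^j`, and dominated
convergence for the series gives convergence uniformly for `w` in bounded sets.
-/

open Finset PowerSeries Filter Topology
open scoped Nat RealInnerProductSpace

namespace PowerSeries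

variable {R : Type*} [Semiring R] [PartialOrder R] [IsOrderedRing R] {f g f₁ f₂ g₁ g₂ : R⟦X⟧}

theorem coeff_mul_nonneg (hf : ∀ n, 0 ≤ coeff n f) (hg : ∀ n, 0 ≤ coeff n g) (n : ℕ) :
    0 ≤ coeff n (f * g) := by
  rw [coeff_mul]
  exact sum_nonneg fun ij _ => mul_nonneg (hf ij.1) (hg ij.2)

theorem coeff_pow_nonneg (hf : ∀ n, 0 ≤ coeff n f) (k n : ℕ) : 0 ≤ coeff n (f ^ k) := by
  induction k generalizing n with
  | zero => rw [pow_zero, coeff_one]; split_ifs <;> simp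
  | succ k ih => rw [pow_succ]; exact coeff_mul_nonneg ih hf n

theorem coeff_mul_le_coeff_mul (hf₁ : ∀ n, 0 ≤ coeff n f₁) (hg₁ : ∀ n, 0 ≤ coeff n g₁)
    (hf : ∀ n, coeff n f₁ ≤ coeff n f₂) (hg : ∀ n, coeff n g₁ ≤ coeff n g₂) (n : ℕ) :
    coeff n (f₁ * g₁) ≤ coeff n (f₂ * g₂) := by
  rw [coeff_mul, coeff_mul]
  exact sum_le_sum fun ij _ =>
    mul_le_mul (hf ij.1) (hg ij.2) (hg₁ ij.2) ((hf₁ ij.1).trans (hf ij.1))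

theorem coeff_pow_le_coeff_pow (hf : ∀ n, 0 ≤ coeff n f) (hfg : ∀ n, coeff n f ≤ coeff n g)
    (k n : ℕ) : coeff n (f ^ k) ≤ coeff n (g ^ k) := by
  induction k generalizing n with
  | zero => rfl
  | succ k ih =>
    rw [pow_succ, pow_succ]
    exact coeff_mul_le_coeff_mul (coeff_pow_nonneg hf k) hf ih hfg n

theorem coeff_one_add_C_mul_X_pow {A : Type*} [CommRing A] (b : A) (n j : ℕ) :
    coeff j ((1 + C b * X) ^ n) = n.choose j * b ^ j := by
  have h : (1 + X : A⟦X⟧) ^ n = ((1 + Polynomial.X : Polynomial A) ^ n : Polynomial A) := by simp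
  rw [← rescale_X, ← map_one (rescale b), ← map_add, ← map_pow, coeff_rescale, h,
    Polynomial.coeff_coe, Polynomial.coeff_one_add_X_pow, mul_comm]

theorem rescale_exp_pow {A : Type*} [CommRing A] [Algebra ℚ A] (c : A) (m : ℕ) :
    rescale c (exp A) ^ m = rescale (m * c) (exp A) := by
  rw [← map_pow, exp_pow_eq_rescale_exp, rescale_rescale]

theorem coeff_rescale_exp {K : Type*} [Field K] [CharZero K] (c : K) (m : ℕ) :
    coeff m (rescale c (exp K)) = c ^ m / m ! := by
  simp [div_eq_mul_inv]

end PowerSeries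

noncomputable def superoscCoeff (n k : ℕ) (a : ℝ) : ℝ :=
  n.choose k * ((1 + a) / 2) ^ (n - k) * ((1 - a) / 2) ^ k

/-- The power series of `cosh (c t) + a sinh (c t)`. -/
noncomputable def superoscGenFun (a c : ℝ) : ℝ⟦X⟧ :=
  C ((1 + a) / 2) * rescale c (exp ℝ) + C ((1 - a) / 2) * rescale (-c) (exp ℝ)

theorem coeff_superoscGenFun (a c : ℝ) (m : ℕ) :
    coeff m (superoscGenFun a c) = (if Even m then 1 else a) * c ^ m / m ! := by
  simp only [superoscGenFun, map_add, coeff_C_mul, coeff_rescale_exp, neg_pow c]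
  split_ifs with hm
  · rw [hm.neg_one_pow]; ring
  · rw [(Nat.not_even_iff_odd.mp hm).neg_one_pow]; ring

theorem coeff_superoscGenFun_pow (a c : ℝ) (n j : ℕ) :
    coeff j (superoscGenFun a c ^ n) =
      (∑ k ∈ range (n + 1), superoscCoeff n k a * (c * (n - 2 * k)) ^ j) / j ! := by
  rw [superoscGenFun, add_comm, add_pow, map_sum, sum_div]
  refine sum_congr rfl fun k hk => ?_
  have hkn : k ≤ n := mem_range_succ_iff.mp hk
  rw [mul_pow, mul_pow, rescale_exp_pow, rescale_exp_pow, ← map_pow C, ← map_pow C,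
    ← map_natCast (C (R := ℝ))]
  rw [show ∀ x y z w u : ℝ⟦X⟧, x * y * (z * w) * u = (x * z * u) * (y * w) by intros; ring,
    exp_mul_exp_eq_exp_add, ← map_mul, ← map_mul, coeff_C_mul, coeff_rescale_exp,
    superoscCoeff, Nat.cast_sub hkn]
  ring

theorem coeff_superoscGenFun_nonneg {a c : ℝ} (hc : 0 ≤ c) (ha : 0 ≤ a) (m : ℕ) :
    0 ≤ coeff m (superoscGenFun a c) := by
  rw [coeff_superoscGenFun]; split_ifs <;> positivity

theorem coeff_one_add_C_mul_X_le_coeff_superoscGenFun {a c : ℝ} (hc : 0 ≤ c) (ha : 0 ≤ a)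
    (m : ℕ) : coeff m (1 + C (a * c) * X) ≤ coeff m (superoscGenFun a c) := by
  rcases m with _ | _ | m
  · simp [coeff_superoscGenFun]
  · simp [coeff_superoscGenFun]
  · simp only [map_add, coeff_one, coeff_succ_mul_X, coeff_C, if_neg (Nat.succ_ne_zero _), add_zero]
    exact coeff_superoscGenFun_nonneg hc ha _

theorem coeff_superoscGenFun_le_coeff_rescale_exp {a c : ℝ} (hc : 0 ≤ c) (ha : 1 ≤ a) (m : ℕ) :
    coeff m (superoscGenFun a c) ≤ coeff m (rescale (a * c) (exp ℝ)) := by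
  rw [coeff_superoscGenFun, coeff_rescale_exp, mul_pow]
  gcongr
  split_ifs with hm
  · exact one_le_pow₀ ha
  · exact le_self_pow₀ ha (by rintro rfl; exact hm Even.zero)

noncomputable def superoscMoment (a : ℝ) (n j : ℕ) : ℝ :=
  ∑ k ∈ range (n + 1), superoscCoeff n k a * (1 - 2 * k / n) ^ j

theorem superoscMoment_eq_coeff {n : ℕ} (hn : n ≠ 0) (a : ℝ) (j : ℕ) :
    superoscMoment a n j = j ! * coeff j (superoscGenFun a (1 / n) ^ n) := by
  rw [coeff_superoscGenFun_pow, mul_div_cancel₀ _ (by positivity), superoscMoment]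
  congr! 3
  field_simp

theorem superoscMoment_le {a : ℝ} (ha : 1 ≤ a) {n : ℕ} (hn : n ≠ 0) (j : ℕ) :
    superoscMoment a n j ≤ a ^ j := by
  have hc : (0 : ℝ) ≤ 1 / n := by positivity
  calc superoscMoment a n j
      ≤ j ! * coeff j (rescale (a * (1 / n)) (exp ℝ) ^ n) := by
        rw [superoscMoment_eq_coeff hn]
        gcongr
        exact coeff_pow_le_coeff_pow (coeff_superoscGenFun_nonneg hc (by linarith))
          (coeff_superoscGenFun_le_coeff_rescale_exp hc ha) n j
    _ = a ^ j := by
        rw [rescale_exp_pow, coeff_rescale_exp]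
        field_simp

theorem le_superoscMoment {a : ℝ} (ha : 0 ≤ a) {n : ℕ} (hn : n ≠ 0) (j : ℕ) :
    a ^ j * (n.descFactorial j / n ^ j) ≤ superoscMoment a n j := by
  have hc : (0 : ℝ) ≤ 1 / n := by positivity
  calc a ^ j * (n.descFactorial j / n ^ j)
      = j ! * coeff j ((1 + C (a * (1 / n)) * X) ^ n) := by
        rw [coeff_one_add_C_mul_X_pow, Nat.descFactorial_eq_factorial_mul_choose]
        push_cast
        rw [mul_one_div, div_pow]
        field_simp
    _ ≤ superoscMoment a n j := by
        rw [superoscMoment_eq_coeff hn]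
        gcongr
        refine coeff_pow_le_coeff_pow (fun m => ?_)
          (coeff_one_add_C_mul_X_le_coeff_superoscGenFun hc ha) n j
        rcases m with _ | _ | m <;> simp [coeff_one, coeff_C]
        positivity

theorem abs_superoscMoment_le {a : ℝ} (ha : 1 ≤ a) {n : ℕ} (hn : n ≠ 0) (j : ℕ) :
    |superoscMoment a n j| ≤ a ^ j := by
  have ha₀ : 0 ≤ a := by linarith
  have hpos : 0 ≤ a ^ j * (n.descFactorial j / n ^ j : ℝ) := by positivity
  rw [abs_of_nonneg (hpos.trans (le_superoscMoment ha₀ hn j))]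
  exact superoscMoment_le ha hn j

theorem tendsto_superoscMoment {a : ℝ} (ha : 1 ≤ a) (j : ℕ) :
    Tendsto (superoscMoment a · j) atTop (𝓝 (a ^ j)) := by
  have hdesc : Tendsto (fun n : ℕ => (n.descFactorial j : ℝ) / n ^ j) atTop (𝓝 1) :=
    (Asymptotics.isEquivalent_iff_tendsto_one
      (eventually_ne_atTop 0 |>.mono fun n hn => by positivity)).mp
      (isEquivalent_descFactorial j)
  refine tendsto_of_tendsto_of_tendsto_of_le_of_le' (by simpa using hdesc.const_mul (a ^ j))
    tendsto_const_nhds ?_ ?_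
  · filter_upwards [eventually_ne_atTop 0] with n hn
    exact le_superoscMoment (by linarith) hn j
  · filter_upwards [eventually_ne_atTop 0] with n hn
    exact superoscMoment_le ha hn j

theorem summable_pow_div_factorial_mul_pow (R b : ℝ) :
    Summable fun m : ℕ => R ^ m / m ! * b ^ m := by
  simpa only [div_mul_eq_mul_div, ← mul_pow] using Real.summable_pow_div_factorial (R * b)

theorem norm_pow_div_factorial_mul_le {R : ℝ} {w z : ℂ} (hw : ‖w‖ ≤ R) (m : ℕ) :
    ‖w ^ m / m ! * z‖ ≤ R ^ m / m ! * ‖z‖ := by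
  rw [norm_mul, norm_div, norm_pow, Complex.norm_natCast]
  gcongr

theorem summable_pow_div_factorial_mul {R b : ℝ} {w : ℂ} {u : ℕ → ℂ} (hw : ‖w‖ ≤ R)
    (hu : ∀ m, ‖u m‖ ≤ b ^ m) : Summable fun m : ℕ => w ^ m / m ! * u m := by
  have hR : 0 ≤ R := (norm_nonneg w).trans hw
  refine (summable_pow_div_factorial_mul_pow R b).of_norm_bounded fun m => ?_
  exact (norm_pow_div_factorial_mul_le hw m).trans (by gcongr; exact hu m)

theorem tendstoUniformlyOn_tsum_pow_div_factorial_mul {ι : Type*} {l : Filter ι}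
    {u : ι → ℕ → ℂ} {v : ℕ → ℂ} {b : ℝ} {S : Set ℂ} (hS : Bornology.IsBounded S)
    (hu : ∀ᶠ i in l, ∀ m, ‖u i m‖ ≤ b ^ m) (hv : ∀ m, Tendsto (u · m) l (𝓝 (v m))) :
    TendstoUniformlyOn (fun i w => ∑' m, w ^ m / m ! * u i m)
      (fun w => ∑' m, w ^ m / m ! * v m) l S := by
  rcases l.eq_or_neBot with rfl | _
  · simp [TendstoUniformlyOn]
  obtain ⟨R, hR, hSR⟩ := hS.subset_closedBall_lt 0 0
  have hv_le (m : ℕ) : ‖v m‖ ≤ b ^ m :=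
    le_of_tendsto (hv m).norm (hu.mono fun i hi => hi m)
  have hsum : Summable fun m : ℕ => R ^ m / m ! * (2 * b ^ m) := by
    simpa only [mul_left_comm] using (summable_pow_div_factorial_mul_pow R b).mul_left 2
  have hdiff_le : ∀ᶠ i in l, ∀ m, R ^ m / m ! * ‖u i m - v m‖ ≤ R ^ m / m ! * (2 * b ^ m) := by
    filter_upwards [hu] with i hui m
    gcongr
    linarith [norm_sub_le (u i m) (v m), hui m, hv_le m]
  have hδ : Tendsto (fun i => ∑' m, R ^ m / m ! * ‖u i m - v m‖) l (𝓝 0) := by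
    have hterm (m : ℕ) : Tendsto (fun i => R ^ m / m ! * ‖u i m - v m‖) l (𝓝 0) := by
      simpa using ((tendsto_sub_nhds_zero_iff.mpr (hv m)).norm).const_mul (R ^ m / m !)
    simpa using tendsto_tsum_of_dominated_convergence hsum hterm
      (hdiff_le.mono fun i hi m => by rw [Real.norm_of_nonneg (by positivity)]; exact hi m)
  rw [Metric.tendstoUniformlyOn_iff]
  intro ε hε
  filter_upwards [hu, hdiff_le, hδ.eventually (gt_mem_nhds hε)] with i hui hdiff hδi w hw
  have hwR : ‖w‖ ≤ R := by simpa using hSR hw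
  rw [dist_eq_norm, ← (summable_pow_div_factorial_mul hwR hv_le).tsum_sub
    (summable_pow_div_factorial_mul hwR hui)]
  refine lt_of_le_of_lt (tsum_of_norm_bounded (g := fun m => R ^ m / m ! * ‖u i m - v m‖) ?_
    fun m => ?_) hδi
  · exact (hsum.of_nonneg_of_le (fun m => by positivity) hdiff).hasSum
  · rw [← mul_sub, norm_sub_rev]
    exact norm_pow_div_factorial_mul_le hwR m

theorem hasSum_cexp (z : ℂ) : HasSum (fun m : ℕ => z ^ m / m !) (Complex.exp z) :=
  Complex.exp_eq_exp_ℂ ▸ NormedSpace.expSeries_div_hasSum_exp z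

theorem hasSum_superoscSum (a : ℝ) (q n : ℕ) (w : ℂ) :
    HasSum (fun m : ℕ => w ^ m / m ! * (superoscMoment a n (q * m) : ℂ))
      (∑ k ∈ range (n + 1),
        (superoscCoeff n k a : ℂ) * Complex.exp (w * (1 - 2 * (k : ℂ) / n) ^ q)) := by
  refine (hasSum_sum fun k _ => (hasSum_cexp _).mul_left (superoscCoeff n k a : ℂ)).congr_fun
    fun m => ?_
  simp only [superoscMoment, Complex.ofReal_sum, mul_sum]
  refine sum_congr rfl fun k _ => ?_
  push_cast
  ring

theorem tendstoUniformlyOn_superoscSum {a : ℝ} (ha : 1 ≤ a) (q : ℕ) {S : Set ℂ}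
    (hS : Bornology.IsBounded S) :
    TendstoUniformlyOn
      (fun n w => ∑ k ∈ range (n + 1),
        (superoscCoeff n k a : ℂ) * Complex.exp (w * (1 - 2 * (k : ℂ) / n) ^ q))
      (fun w => Complex.exp (w * a ^ q)) atTop S := by
  have hbound : ∀ᶠ n in atTop, ∀ m, ‖(superoscMoment a n (q * m) : ℂ)‖ ≤ (a ^ q) ^ m := by
    filter_upwards [eventually_ne_atTop 0] with n hn m
    rw [Complex.norm_real, Real.norm_eq_abs, ← pow_mul]
    exact abs_superoscMoment_le ha hn (q * m)
  refine ((tendstoUniformlyOn_tsum_pow_div_factorial_mul (v := fun m => ((a ^ (q * m) : ℝ) : ℂ))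
    hS hbound fun m => (tendsto_superoscMoment ha (q * m)).ofReal).congr ?_).congr_right ?_
  · exact Eventually.of_forall fun n w _ => (hasSum_superoscSum a q n w).tsum_eq
  · intro w _
    refine ((hasSum_cexp _).congr_fun fun m => ?_).tsum_eq
    push_cast
    ring

theorem superoscillation_convergence_even_power
    (hbar : ℝ) (d : ℕ)
    (p : EuclideanSpace ℝ (Fin d)) (a : ℝ) (ha : 1 < a)
    (q : ℕ)
    (Y : ℕ → EuclideanSpace ℝ (Fin d) → ℂ)
    (hY : ∀ (n : ℕ) (x : EuclideanSpace ℝ (Fin d)),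
      Y n x = ∑ k ∈ Finset.range (n + 1),
        ((n.choose k : ℂ) * (((1 + a) / 2 : ℝ) : ℂ) ^ (n - k)
            * (((1 - a) / 2 : ℝ) : ℂ) ^ k)
          * Complex.exp (Complex.I * ((⟪p, x⟫ : ℝ) : ℂ) * (-Complex.I) ^ q
              * (1 - 2 * (k : ℂ) / (n : ℂ)) ^ q / (hbar : ℂ))) :
    (∀ x : EuclideanSpace ℝ (Fin d),
      Filter.Tendsto (fun n : ℕ => Y n x) Filter.atTop
        (nhds (Complex.exp (Complex.I * ((⟪p, x⟫ : ℝ) : ℂ)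
          * (-Complex.I * (a : ℂ)) ^ q / (hbar : ℂ)))))
    ∧ ∀ K : Set (EuclideanSpace ℝ (Fin d)), IsCompact K →
        TendstoUniformlyOn (fun n x => Y n x)
          (fun x => Complex.exp (Complex.I * ((⟪p, x⟫ : ℝ) : ℂ)
            * (-Complex.I * (a : ℂ)) ^ q / (hbar : ℂ)))
          Filter.atTop K := by
  set w : EuclideanSpace ℝ (Fin d) → ℂ :=
    fun x => Complex.I * ((⟪p, x⟫ : ℝ) : ℂ) * (-Complex.I) ^ q / hbar
  have hw : Continuous w := by fun_prop
  have hYw : (fun n x => Y n x) = fun n x => ∑ k ∈ range (n + 1),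
      (superoscCoeff n k a : ℂ) * Complex.exp (w x * (1 - 2 * (k : ℂ) / n) ^ q) := by
    funext n x
    rw [hY]
    refine sum_congr rfl fun k _ => ?_
    simp only [superoscCoeff, w]
    push_cast
    ring_nf
  have hlim : (fun x => Complex.exp (Complex.I * ((⟪p, x⟫ : ℝ) : ℂ)
      * (-Complex.I * (a : ℂ)) ^ q / (hbar : ℂ))) = fun x => Complex.exp (w x * a ^ q) := by
    funext x
    simp only [w, mul_pow]
    ring_nf
  have hunif (K : Set (EuclideanSpace ℝ (Fin d))) (hK : IsCompact K) :
      TendstoUniformlyOn (fun n x => Y n x) (fun x => Complex.exp (Complex.I * ((⟪p, x⟫ : ℝ) : ℂ)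
        * (-Complex.I * (a : ℂ)) ^ q / (hbar : ℂ))) atTop K := by
    rw [hYw, hlim]
    exact ((tendstoUniformlyOn_superoscSum ha.le q (hK.image hw).isBounded).comp w).mono
      (Set.subset_preimage_image w K)
  exact ⟨fun x => (hunif {x} isCompact_singleton).tendsto_at rfl, hunif⟩
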